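/- arXiv:1711.10593 — 3 statements merged into one kernel-verified Lean document; each statement's English description precedes it below -/
import Mathlib

section
/- Let D > 0, let M ≥ 1, let A ⊆ [0, D] be a measurable set (the array aperture), and let W ∈ ℝ^{M×M} be an orthogonal matrix whose j-th column w^j satisfies A_arr w^j = ν_j w^j with ν_j ≠ 0 for every j = 1,…,M. Let C ∈ ℂ^M and let Π(x_s, x_r) = (Σ_{k=1}^M C_k X_k(x_s)) · (Σ_{l=1}^M C_l X_l(x_r)) for x_s, x_r ∈ [0, D]. Define the M×M matrix S by S_{nm} = (ν_n ν_m)^{-1} ∫_A ∫_A Π(x_s, x_r) s_n(x_s) s_m(x_r) dx_s dx_r. Then the projected response matrix Q = W S Wᵀ satisfies Q_{nm} = C_n · C_m for all 1 ≤ n, m ≤ M; in particular, it coincides with the projected response matrix obtained from an array spanning the whole cross-section [0, D]. -/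
/-!
Write `u = Σ_k C_k X_k`, so that `Π(x_s, x_r) = u(x_s) u(x_r)` and the double integral defining
`S_{nm}` factors into `(∫_A u s_n) (∫_A u s_m)`. Expanding `u s_j` in the modes turns `∫_A u s_j`
into `Cᵀ A_arr w^j = ν_j (Wᵀ C)_j`, so `S = b bᵀ` with `b = Wᵀ C`, and `W Wᵀ = 1` gives
`Q = (W b)(W b)ᵀ = C Cᵀ`. On the full aperture the sine modes are orthonormal, i.e. the array
matrix is the identity, and the same computation gives `C_n C_m` again.
-/

open MeasureTheory Real Finset Matrix

/-- Vertical mode `X_n(x) = sqrt(2/D) * sin(nπx/D)`. -/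
noncomputable def vmode (D : ℝ) (n : ℕ) (x : ℝ) : ℝ :=
  Real.sqrt (2 / D) * Real.sin (n * Real.pi * x / D)

/-- Array matrix `(A_arr)_{mn} = ∫_A X_m X_n`. -/
noncomputable def arrMatrix (D : ℝ) (M : ℕ) (A : Set ℝ) : Matrix (Fin M) (Fin M) ℝ :=
  fun m n => ∫ x in A, vmode D (m.1 + 1) x * vmode D (n.1 + 1) x

/-- Trigonometric polynomial `s(x) = Σ_i w_i X_i(x)`. -/
noncomputable def trigPoly (D : ℝ) (M : ℕ) (w : Fin M → ℝ) (x : ℝ) : ℝ :=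
  ∑ i : Fin M, w i * vmode D (i.1 + 1) x

lemma integral_cos_int_mul_pi_div {D : ℝ} (hD : D ≠ 0) (k : ℤ) :
    ∫ x in (0:ℝ)..D, cos (k * π * x / D) = if k = 0 then D else 0 := by
  split_ifs with hk
  · simp [hk]
  have hc : (k * π / D : ℝ) ≠ 0 := by have := pi_ne_zero; positivity
  have hsin : sin (k * π / D * D) = 0 := by rw [div_mul_cancel₀ _ hD, sin_int_mul_pi]
  have hrw : ∀ x, (k:ℝ) * π * x / D = (k * π / D) * x := fun x => by ring
  simp_rw [hrw]
  simp [hc, integral_cos, hsin]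

lemma integral_sin_mul_sin_nat {D : ℝ} (hD : D ≠ 0) {a b : ℕ} (hab : a + b ≠ 0) :
    ∫ x in (0:ℝ)..D, sin (a * π * x / D) * sin (b * π * x / D) = if a = b then D / 2 else 0 := by
  have hprod : ∀ x, sin (a * π * x / D) * sin (b * π * x / D) =
      (cos (((a - b : ℤ) : ℝ) * π * x / D) - cos (((a + b : ℤ) : ℝ) * π * x / D)) / 2 := by
    intro x
    rw [eq_div_iff two_ne_zero, mul_comm, ← mul_assoc, two_mul_sin_mul_sin]
    push_cast; ring_nf
  have hint : ∀ k : ℤ, IntervalIntegrable (fun x => cos (k * π * x / D)) volume 0 D :=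
    fun k => (by fun_prop : Continuous _).intervalIntegrable _ _
  simp_rw [hprod, intervalIntegral.integral_div, intervalIntegral.integral_sub (hint _) (hint _),
    integral_cos_int_mul_pi_div hD]
  replace hab : (a + b : ℤ) ≠ 0 := by omega
  simp only [hab, if_false, sub_zero, sub_eq_zero, Nat.cast_inj]
  split_ifs <;> simp

lemma continuous_vmode (D : ℝ) (n : ℕ) : Continuous (vmode D n) := by
  unfold vmode; fun_prop

lemma integral_vmode_mul_vmode {D : ℝ} (hD : 0 < D) {a b : ℕ} (hab : a + b ≠ 0) :
    ∫ x in Set.Icc 0 D, vmode D a x * vmode D b x = if a = b then 1 else 0 := by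
  have hsq : √(2 / D) * √(2 / D) = 2 / D := Real.mul_self_sqrt (by positivity)
  have hprod : ∀ x, vmode D a x * vmode D b x =
      2 / D * (sin (a * π * x / D) * sin (b * π * x / D)) := fun x => by
    rw [vmode, vmode, mul_mul_mul_comm, hsq]
  rw [integral_Icc_eq_integral_Ioc, ← intervalIntegral.integral_of_le hD.le]
  simp_rw [hprod, intervalIntegral.integral_const_mul, integral_sin_mul_sin_nat hD.ne' hab]
  split_ifs
  · field_simp
  · simp

lemma arrMatrix_Icc {D : ℝ} (hD : 0 < D) (M : ℕ) : arrMatrix D M (Set.Icc 0 D) = 1 := by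
  ext m n
  rw [arrMatrix, integral_vmode_mul_vmode hD (by omega), Matrix.one_apply]
  simp [Fin.val_inj]

lemma integrableOn_vmode_mul_vmode {D : ℝ} {A : Set ℝ} (hA : A ⊆ Set.Icc 0 D) (a b : ℕ) :
    IntegrableOn (fun x => vmode D a x * vmode D b x) A :=
  (((continuous_vmode D a).mul (continuous_vmode D b)).integrableOn_Icc).mono_set hA

lemma integral_sum_mul_sum {ι X 𝕜 : Type*} [Fintype ι] [RCLike 𝕜] [MeasurableSpace X]
    {μ : Measure X} {f : ι → X → 𝕜} (hf : ∀ i j, Integrable (fun x => f i x * f j x) μ)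
    (c w : ι → 𝕜) :
    ∫ x, (∑ i, c i * f i x) * (∑ j, w j * f j x) ∂μ =
      c ⬝ᵥ (Matrix.of (fun i j => ∫ x, f i x * f j x ∂μ) *ᵥ w) := by
  have hexp : ∀ x, (∑ i, c i * f i x) * (∑ j, w j * f j x) =
      ∑ i, ∑ j, c i * w j * (f i x * f j x) := fun x => by
    rw [Finset.sum_mul_sum]; simp_rw [mul_mul_mul_comm]
  simp_rw [hexp]
  rw [integral_finsetSum _ fun i _ => integrable_finsetSum _ fun j _ => (hf i j).const_mul _]
  simp_rw [integral_finsetSum _ fun j _ => (hf _ j).const_mul _, integral_const_mul]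
  simp only [dotProduct, mulVec, Matrix.of_apply, Finset.mul_sum]
  exact Finset.sum_congr rfl fun i _ => Finset.sum_congr rfl fun j _ => by ring

lemma integral_integral_mul {X Y 𝕜 : Type*} [RCLike 𝕜] [MeasurableSpace X] [MeasurableSpace Y]
    (μ : Measure X) (ν : Measure Y) (f : X → 𝕜) (g : Y → 𝕜) :
    ∫ x, ∫ y, f x * g y ∂ν ∂μ = (∫ x, f x ∂μ) * ∫ y, g y ∂ν := by
  simp_rw [integral_const_mul, integral_mul_const]

lemma map_mulVec_vecMul_map_of_mul_transpose_eq_one {n R S : Type*} [Fintype n] [DecidableEq n]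
    [CommSemiring R] [CommSemiring S] (f : R →+* S) {W : Matrix n n R} (hW : W * Wᵀ = 1)
    (v : n → S) : W.map f *ᵥ (v ᵥ* W.map f) = v := by
  rw [← mulVec_transpose, mulVec_mulVec, ← transpose_map, ← Matrix.map_mul, hW, Matrix.map_one f
    f.map_zero f.map_one, one_mulVec]

lemma ofReal_trigPoly (D : ℝ) (M : ℕ) (w : Fin M → ℝ) (x : ℝ) :
    ((trigPoly D M w x : ℝ) : ℂ) = ∑ i : Fin M, (w i : ℂ) * (vmode D (i.1 + 1) x : ℂ) := by
  simp [trigPoly]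

lemma trigPoly_single (D : ℝ) (M : ℕ) (j : Fin M) :
    trigPoly D M (Pi.single j 1) = vmode D (j.1 + 1) := by
  ext x; simp [trigPoly, Pi.single_apply]

lemma integral_modeSum_mul_trigPoly {D : ℝ} {M : ℕ} {A : Set ℝ} (hA : A ⊆ Set.Icc 0 D)
    (c : Fin M → ℂ) (w : Fin M → ℝ) :
    ∫ x in A, (∑ k : Fin M, c k * (vmode D (k.1 + 1) x : ℂ)) * (trigPoly D M w x : ℂ) =
      c ⬝ᵥ ((arrMatrix D M A).map ((↑) : ℝ → ℂ) *ᵥ ((↑) ∘ w)) := by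
  simp_rw [ofReal_trigPoly]
  have h := integral_sum_mul_sum (μ := volume.restrict A)
    (f := fun i x => (vmode D (i.1 + 1) x : ℂ)) (fun i j => by
      exact_mod_cast (integrableOn_vmode_mul_vmode hA _ _).ofReal) c (fun i => (w i : ℂ))
  refine h.trans ?_
  congr 2
  ext i j
  simp only [Matrix.of_apply, Matrix.map_apply, arrMatrix, ← Complex.ofReal_mul]
  exact integral_ofReal

lemma integral_modeSum_mul_trigPoly_of_mulVec_eq {D : ℝ} {M : ℕ} {A : Set ℝ}
    (hA : A ⊆ Set.Icc 0 D) (c : Fin M → ℂ) {w : Fin M → ℝ} {ν : ℝ}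
    (hw : arrMatrix D M A *ᵥ w = ν • w) :
    ∫ x in A, (∑ k : Fin M, c k * (vmode D (k.1 + 1) x : ℂ)) * (trigPoly D M w x : ℂ) =
      ν * (c ⬝ᵥ ((↑) ∘ w)) := by
  have hw' : (arrMatrix D M A).map ((↑) : ℝ → ℂ) *ᵥ ((↑) ∘ w) = (ν : ℂ) • ((↑) ∘ w) := by
    ext i
    exact (Complex.ofRealHom.map_mulVec (arrMatrix D M A) w i).symm.trans (by simp [hw])
  rw [integral_modeSum_mul_trigPoly hA, hw', dotProduct_smul, smul_eq_mul]

lemma integral_modeSum_mul_vmode {D : ℝ} (hD : 0 < D) {M : ℕ} (c : Fin M → ℂ) (j : Fin M) :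
    ∫ x in Set.Icc 0 D, (∑ k : Fin M, c k * (vmode D (k.1 + 1) x : ℂ)) *
      (vmode D (j.1 + 1) x : ℂ) = c j := by
  have h := integral_modeSum_mul_trigPoly_of_mulVec_eq subset_rfl c (w := Pi.single j 1) (ν := 1)
    (by rw [arrMatrix_Icc hD, one_mulVec, one_smul])
  have hsingle : ((↑) : ℝ → ℂ) ∘ Pi.single j 1 = Pi.single j 1 := by
    ext i; simp [Pi.single_apply, apply_ite]
  simpa [trigPoly_single, hsingle] using h

theorem stmt_0_general (D : ℝ) (hD : 0 < D) (M : ℕ)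
    (A : Set ℝ) (hAsub : A ⊆ Set.Icc 0 D)
    (W : Matrix (Fin M) (Fin M) ℝ)
    (hWorth : W * Wᵀ = 1 ∧ Wᵀ * W = 1)
    (ν : Fin M → ℝ) (hν : ∀ j, ν j ≠ 0)
    (heig : ∀ j, (arrMatrix D M A).mulVec (fun i => W i j) = fun i => ν j * W i j)
    (C : Fin M → ℂ)
    (Pfun : ℝ → ℝ → ℂ)
    (hP : ∀ xs xr, Pfun xs xr =
      (∑ k : Fin M, C k * (vmode D (k.1 + 1) xs : ℂ)) *
      (∑ l : Fin M, C l * (vmode D (l.1 + 1) xr : ℂ)))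
    (S : Matrix (Fin M) (Fin M) ℂ)
    (hS : ∀ n m, S n m = ((ν n * ν m : ℝ) : ℂ)⁻¹ *
      ∫ xs in A, ∫ xr in A,
        Pfun xs xr * (trigPoly D M (fun i => W i n) xs : ℂ) *
          (trigPoly D M (fun i => W i m) xr : ℂ))
    (Q : Matrix (Fin M) (Fin M) ℂ)
    (hQ : Q = W.map ((↑) : ℝ → ℂ) * S * (W.map ((↑) : ℝ → ℂ))ᵀ) :
    ∀ n m : Fin M, Q n m = C n * C m ∧
      Q n m = ∫ xs in Set.Icc (0:ℝ) D, ∫ xr in Set.Icc (0:ℝ) D,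
        Pfun xs xr * (vmode D (n.1 + 1) xs : ℂ) * (vmode D (m.1 + 1) xr : ℂ) := by
  have hPint : ∀ (B : Set ℝ) (f g : ℝ → ℂ), ∫ xs in B, ∫ xr in B, Pfun xs xr * f xs * g xr =
      (∫ x in B, (∑ k : Fin M, C k * (vmode D (k.1 + 1) x : ℂ)) * f x) *
        ∫ x in B, (∑ k : Fin M, C k * (vmode D (k.1 + 1) x : ℂ)) * g x := by
    intro B f g
    rw [← integral_integral_mul]
    congr 1; funext xs; congr 1; funext xr
    rw [hP]; ring
  have hSb : S = vecMulVec (C ᵥ* W.map ((↑) : ℝ → ℂ)) (C ᵥ* W.map ((↑) : ℝ → ℂ)) := by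
    ext p q
    have hν' : ((ν p * ν q : ℝ) : ℂ) ≠ 0 := by exact_mod_cast mul_ne_zero (hν p) (hν q)
    rw [hS, hPint, integral_modeSum_mul_trigPoly_of_mulVec_eq hAsub C (heig p),
      integral_modeSum_mul_trigPoly_of_mulVec_eq hAsub C (heig q), vecMulVec_apply,
      inv_mul_eq_iff_eq_mul₀ hν']
    change _ = _ * ((C ⬝ᵥ ((↑) ∘ fun i => W i p)) * (C ⬝ᵥ ((↑) ∘ fun i => W i q)))
    push_cast
    ring
  have hWC : W.map ((↑) : ℝ → ℂ) *ᵥ (C ᵥ* W.map ((↑) : ℝ → ℂ)) = C :=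
    map_mulVec_vecMul_map_of_mul_transpose_eq_one Complex.ofRealHom hWorth.1 C
  have hQC : Q = vecMulVec C C := by
    rw [hQ, hSb, mul_vecMulVec, vecMulVec_mul, vecMul_transpose, hWC]
  intro n m
  rw [hQC, vecMulVec_apply, hPint, integral_modeSum_mul_vmode hD, integral_modeSum_mul_vmode hD]
  exact ⟨rfl, rfl⟩

/-- the projected response matrix `Q = W S Wᵀ` built from a partial-aperture
array recovers `Q_{nm} = C_n C_m`, and hence coincides with the full-aperture projection. -/
theorem stmt_0 (D : ℝ) (hD : 0 < D) (M : ℕ) (hM : 1 ≤ M)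
    (A : Set ℝ) (hAmeas : MeasurableSet A) (hAsub : A ⊆ Set.Icc 0 D)
    (W : Matrix (Fin M) (Fin M) ℝ)
    (hWorth : W * Wᵀ = 1 ∧ Wᵀ * W = 1)
    (ν : Fin M → ℝ) (hν : ∀ j, ν j ≠ 0)
    (heig : ∀ j, (arrMatrix D M A).mulVec (fun i => W i j) = fun i => ν j * W i j)
    (C : Fin M → ℂ)
    (Pfun : ℝ → ℝ → ℂ)
    (hP : ∀ xs xr, Pfun xs xr =
      (∑ k : Fin M, C k * (vmode D (k.1 + 1) xs : ℂ)) *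
      (∑ l : Fin M, C l * (vmode D (l.1 + 1) xr : ℂ)))
    (S : Matrix (Fin M) (Fin M) ℂ)
    (hS : ∀ n m, S n m = ((ν n * ν m : ℝ) : ℂ)⁻¹ *
      ∫ xs in A, ∫ xr in A,
        Pfun xs xr * (trigPoly D M (fun i => W i n) xs : ℂ) *
          (trigPoly D M (fun i => W i m) xr : ℂ))
    (Q : Matrix (Fin M) (Fin M) ℂ)
    (hQ : Q = W.map ((↑) : ℝ → ℂ) * S * (W.map ((↑) : ℝ → ℂ))ᵀ) :
    ∀ n m : Fin M, Q n m = C n * C m ∧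
      Q n m = ∫ xs in Set.Icc (0:ℝ) D, ∫ xr in Set.Icc (0:ℝ) D,
        Pfun xs xr * (vmode D (n.1 + 1) xs : ℂ) * (vmode D (m.1 + 1) xr : ℂ) :=
  stmt_0_general D hD M A hAsub W hWorth ν hν heig C Pfun hP S hS Q hQ
end

section
/- For all real numbers α and γ, ∫_0^{π/2} cos(α·sin θ)·cos(γ·cos θ) dθ = ∫_0^{π/2} cos(√(α² + γ²)·sin θ) dθ. (Equivalently, both sides equal (π/2)·J₀(√(α² + γ²)), where J₀ is the Bessel function of the first kind of order zero.) -/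
open Real intervalIntegral

/-!
Write `(α, γ) = r (cos φ, sin φ)` with `r = √(α² + γ²)`. Product-to-sum turns the integrand into
the average of `f (θ - φ)` and `f (θ + φ)`, where `f u = cos (r sin u)` is even and `π`-periodic.
The two shifted integrals over `[0, π/2]` glue to an integral of `f` over a full period, which by
periodicity and evenness is twice the integral over `[0, π/2]`.
-/

theorem exists_eq_sqrt_mul_cos_and_eq_sqrt_mul_sin (a b : ℝ) :
    ∃ φ : ℝ, a = √(a ^ 2 + b ^ 2) * cos φ ∧ b = √(a ^ 2 + b ^ 2) * sin φ := by
  have hnorm : ‖(a + b * Complex.I : ℂ)‖ = √(a ^ 2 + b ^ 2) := Complex.norm_add_mul_I a b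
  refine ⟨Complex.arg (a + b * Complex.I), ?_, ?_⟩
  · rw [← hnorm, Complex.norm_mul_cos_arg]; simp
  · rw [← hnorm, Complex.norm_mul_sin_arg]; simp

theorem cos_mul_cos_of_polar (r φ θ : ℝ) :
    cos (r * cos φ * sin θ) * cos (r * sin φ * cos θ)
      = (cos (r * sin (θ - φ)) + cos (r * sin (θ + φ))) / 2 := by
  have hsub : r * sin (θ - φ) = r * cos φ * sin θ - r * sin φ * cos θ := by rw [sin_sub]; ring
  have hadd : r * sin (θ + φ) = r * cos φ * sin θ + r * sin φ * cos θ := by rw [sin_add]; ring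
  rw [hsub, hadd, cos_sub, cos_add]
  ring

namespace Function.Even

variable {f : ℝ → ℝ}

theorem integral_comp_sub_right (hf : f.Even) (a b φ : ℝ) :
    ∫ x in a..b, f (x - φ) = ∫ x in φ - b..φ - a, f x := by
  rw [← intervalIntegral.integral_comp_sub_left f φ]
  exact integral_congr fun x _ => by rw [← hf, neg_sub]

theorem integral_neg_zero (hf : f.Even) (a : ℝ) : ∫ x in -a..0, f x = ∫ x in 0..a, f x := by
  simpa using (hf.integral_comp_sub_right 0 a 0).symm

end Function.Even

theorem Function.Periodic.integral_comp_sub_add_comp_add_of_even {f : ℝ → ℝ} {T : ℝ}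
    (hper : f.Periodic T) (heven : f.Even) (hf : Continuous f) (φ : ℝ) :
    ∫ θ in (0 : ℝ)..T / 2, (f (θ - φ) + f (θ + φ)) = 2 * ∫ θ in (0 : ℝ)..T / 2, f θ := by
  have hint (a b : ℝ) : IntervalIntegrable f MeasureTheory.volume a b := hf.intervalIntegrable a b
  calc ∫ θ in (0 : ℝ)..T / 2, (f (θ - φ) + f (θ + φ))
      = (∫ x in φ - T / 2..φ, f x) + ∫ x in φ..φ + T / 2, f x := by
        rw [integral_add (Continuous.intervalIntegrable (by fun_prop) _ _)
          (Continuous.intervalIntegrable (by fun_prop) _ _), heven.integral_comp_sub_right,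
          intervalIntegral.integral_comp_add_right, sub_zero, zero_add, add_comm (T / 2)]
    _ = ∫ x in φ - T / 2..φ - T / 2 + T, f x := by
        rw [integral_add_adjacent_intervals (hint _ _) (hint _ _)]
        ring_nf
    _ = ∫ x in -(T / 2)..-(T / 2) + T, f x := hper.intervalIntegral_add_eq _ _
    _ = (∫ x in -(T / 2)..0, f x) + ∫ x in (0 : ℝ)..T / 2, f x := by
        rw [integral_add_adjacent_intervals (hint _ _) (hint _ _)]
        ring_nf
    _ = 2 * ∫ θ in (0 : ℝ)..T / 2, f θ := by
        rw [heven.integral_neg_zero]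
        ring

/-- `∫_0^{π/2} cos(α sinθ) cos(γ cosθ) dθ = ∫_0^{π/2} cos(√(α²+γ²) sinθ) dθ`. -/
theorem stmt_9 (α γ : ℝ) :
    ∫ θ in (0:ℝ)..(Real.pi / 2), Real.cos (α * Real.sin θ) * Real.cos (γ * Real.cos θ)
      = ∫ θ in (0:ℝ)..(Real.pi / 2), Real.cos (Real.sqrt (α ^ 2 + γ ^ 2) * Real.sin θ) := by
  obtain ⟨φ, hα, hγ⟩ := exists_eq_sqrt_mul_cos_and_eq_sqrt_mul_sin α γ
  set r := √(α ^ 2 + γ ^ 2)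
  set f : ℝ → ℝ := fun u => cos (r * sin u)
  have hper : f.Periodic π := fun u => by simp [f, sin_add_pi]
  have heven : f.Even := fun u => by simp [f]
  calc ∫ θ in (0 : ℝ)..π / 2, cos (α * sin θ) * cos (γ * cos θ)
      = ∫ θ in (0 : ℝ)..π / 2, (f (θ - φ) + f (θ + φ)) / 2 :=
        integral_congr fun θ _ => by rw [hα, hγ]; exact cos_mul_cos_of_polar r φ θ
    _ = ∫ θ in (0 : ℝ)..π / 2, f θ := by
        rw [intervalIntegral.integral_div,
          hper.integral_comp_sub_add_comp_add_of_even heven (by fun_prop) φ]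
        ring
end

section
/- For all real numbers α and γ, the improper integrals satisfy ∫_0^1 cos(α·ξ)·cos(γ·√(1 − ξ²)) / √(1 − ξ²) dξ = ∫_0^1 cos(√(α² + γ²)·ξ) / √(1 − ξ²) dξ; in particular both integrals converge. -/
open Real MeasureTheory intervalIntegral

/-!
The substitution `ξ = sin θ` turns both integrands into continuous functions on `[0, π/2]`, so
both integrals converge, and it remains to show that
`∫₀^{π/2} cos (α sin θ) cos (γ cos θ) dθ = ∫₀^{π/2} cos (r sin θ) dθ` with `r = √(α² + γ²)`.
Writing `(α, γ) = r (cos φ, sin φ)`, the product-to-sum formula gives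
`cos (α sin θ) cos (γ cos θ) = (cos (r sin (θ - φ)) + cos (r sin (θ + φ))) / 2`.
All these integrands are invariant under `θ ↦ π - θ`, so we may integrate over `[0, π]` instead,
where `θ ↦ cos (r sin θ)` is `π`-periodic and the shifts by `±φ` disappear.
-/

lemma cos_smul_div_sqrt_one_sub_sin_sq (f : ℝ × ℝ → ℝ) {θ : ℝ}
    (hθ : θ ∈ Set.Ioo (-(π / 2)) (π / 2)) :
    cos θ • (f (sin θ, √(1 - sin θ ^ 2)) / √(1 - sin θ ^ 2)) = f (sin θ, cos θ) := by
  rw [← cos_eq_sqrt_one_sub_sin_sq hθ.1.le hθ.2.le, smul_eq_mul,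
    mul_div_cancel₀ _ (cos_pos_of_mem_Ioo hθ).ne']

lemma integral_div_sqrt_one_sub_sq (f : ℝ × ℝ → ℝ) :
    ∫ ξ in (0 : ℝ)..1, f (ξ, √(1 - ξ ^ 2)) / √(1 - ξ ^ 2) =
      ∫ θ in (0 : ℝ)..π / 2, f (sin θ, cos θ) := by
  have hsub := integral_Icc_deriv_smul_of_deriv_nonneg (a := 0) (b := π / 2)
    (g := fun ξ => f (ξ, √(1 - ξ ^ 2)) / √(1 - ξ ^ 2)) continuous_sin.continuousOn
    (fun θ _ => hasDerivAt_sin θ)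
    (fun θ hθ => cos_nonneg_of_mem_Icc ⟨by linarith [pi_pos, hθ.1], hθ.2.le⟩) pi_div_two_pos.le
  rw [sin_zero, sin_pi_div_two] at hsub
  rw [integral_of_le zero_le_one, integral_of_le pi_div_two_pos.le,
    ← integral_Icc_eq_integral_Ioc, ← integral_Icc_eq_integral_Ioc, ← hsub,
    integral_Icc_eq_integral_Ioo, integral_Icc_eq_integral_Ioo]
  exact setIntegral_congr_fun measurableSet_Ioo fun θ hθ =>
    cos_smul_div_sqrt_one_sub_sin_sq f ⟨by linarith [pi_pos, hθ.1], hθ.2⟩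

lemma intervalIntegrable_div_sqrt_one_sub_sq_iff (f : ℝ × ℝ → ℝ) :
    IntervalIntegrable (fun ξ => f (ξ, √(1 - ξ ^ 2)) / √(1 - ξ ^ 2)) volume 0 1 ↔
      IntervalIntegrable (fun θ => f (sin θ, cos θ)) volume 0 (π / 2) := by
  have hsub := integrableOn_Icc_deriv_smul_iff_of_deriv_nonneg (a := 0) (b := π / 2)
    (g := fun ξ => f (ξ, √(1 - ξ ^ 2)) / √(1 - ξ ^ 2)) continuous_sin.continuousOn
    (fun θ _ => hasDerivAt_sin θ)
    (fun θ hθ => cos_nonneg_of_mem_Icc ⟨by linarith [pi_pos, hθ.1], hθ.2.le⟩) pi_div_two_pos.le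
  rw [sin_zero, sin_pi_div_two] at hsub
  rw [intervalIntegrable_iff_integrableOn_Icc_of_le zero_le_one,
    intervalIntegrable_iff_integrableOn_Icc_of_le pi_div_two_pos.le, ← hsub,
    integrableOn_Icc_iff_integrableOn_Ioo, integrableOn_Icc_iff_integrableOn_Ioo]
  exact integrableOn_congr_fun (fun θ hθ =>
    cos_smul_div_sqrt_one_sub_sin_sq f ⟨by linarith [pi_pos, hθ.1], hθ.2⟩) measurableSet_Ioo

lemma exists_eq_sqrt_mul_cos_and_sin (a b : ℝ) :
    ∃ φ, a = √(a ^ 2 + b ^ 2) * cos φ ∧ b = √(a ^ 2 + b ^ 2) * sin φ := by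
  have hnorm : ‖(⟨a, b⟩ : ℂ)‖ = √(a ^ 2 + b ^ 2) := by
    rw [Complex.norm_def, Complex.normSq_mk, sq, sq]
  exact ⟨Complex.arg ⟨a, b⟩, by rw [← hnorm, Complex.norm_mul_cos_arg],
    by rw [← hnorm, Complex.norm_mul_sin_arg]⟩

lemma integral_eq_two_mul_integral_half_of_symm {f : ℝ → ℝ} {a : ℝ}
    (hf : IntervalIntegrable f volume 0 a) (hsymm : ∀ x, f (a - x) = f x) :
    ∫ x in (0 : ℝ)..a, f x = 2 * ∫ x in (0 : ℝ)..a / 2, f x := by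
  have hmid : a / 2 ∈ Set.uIcc 0 a := by
    rcases le_total 0 a with ha | ha
    · exact Set.mem_uIcc_of_le (by linarith) (by linarith)
    · exact Set.mem_uIcc_of_ge (by linarith) (by linarith)
  have hhalf : ∫ x in a / 2..a, f x = ∫ x in (0 : ℝ)..a / 2, f x := by
    simpa [hsymm, show a - a / 2 = a / 2 by ring] using
      integral_comp_sub_left (a := a / 2) (b := a) f a
  rw [← integral_add_adjacent_intervals (hf.mono_set (Set.uIcc_subset_uIcc_left hmid))
    (hf.mono_set (Set.uIcc_subset_uIcc_right hmid)), hhalf]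
  ring

lemma Function.Periodic.intervalIntegral_comp_add_right {f : ℝ → ℝ} {T : ℝ}
    (hf : Function.Periodic f T) (c : ℝ) :
    ∫ x in (0 : ℝ)..T, f (x + c) = ∫ x in (0 : ℝ)..T, f x := by
  simpa [add_comm] using hf.intervalIntegral_add_eq c 0

lemma integral_cos_mul_sin_mul_cos_mul_cos (a b : ℝ) :
    ∫ θ in (0 : ℝ)..π / 2, cos (a * sin θ) * cos (b * cos θ) =
      ∫ θ in (0 : ℝ)..π / 2, cos (√(a ^ 2 + b ^ 2) * sin θ) := by
  obtain ⟨φ, ha, hb⟩ := exists_eq_sqrt_mul_cos_and_sin a b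
  set r := √(a ^ 2 + b ^ 2)
  set h : ℝ → ℝ := fun θ => cos (r * sin θ)
  have h_cont : Continuous h := by fun_prop
  have h_periodic : Function.Periodic h π := fun θ => by simp [h, sin_add_pi]
  have h_product : ∀ θ, cos (a * sin θ) * cos (b * cos θ) = (h (θ - φ) + h (θ + φ)) / 2 := by
    intro θ
    have e₁ : r * sin (θ - φ) = a * sin θ - b * cos θ := by rw [sin_sub, ha, hb]; ring
    have e₂ : r * sin (θ + φ) = a * sin θ + b * cos θ := by rw [sin_add, ha, hb]; ring
    simp only [h, e₁, e₂, cos_sub, cos_add]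
    ring
  have h_shift (c : ℝ) : ∫ θ in (0 : ℝ)..π, h (θ + c) = ∫ θ in (0 : ℝ)..π, h θ :=
    h_periodic.intervalIntegral_comp_add_right c
  have h_shift_int (c : ℝ) : IntervalIntegrable (fun θ => h (θ + c)) volume 0 π :=
    (h_cont.comp (continuous_add_const c)).intervalIntegrable _ _
  apply mul_left_cancel₀ (two_ne_zero (α := ℝ))
  calc 2 * ∫ θ in (0 : ℝ)..π / 2, cos (a * sin θ) * cos (b * cos θ)
      = ∫ θ in (0 : ℝ)..π, cos (a * sin θ) * cos (b * cos θ) :=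
        (integral_eq_two_mul_integral_half_of_symm
          (Continuous.intervalIntegrable (by fun_prop) _ _) fun θ => by
            rw [sin_pi_sub, cos_pi_sub, mul_neg, cos_neg]).symm
    _ = ∫ θ in (0 : ℝ)..π, (h (θ - φ) + h (θ + φ)) / 2 := integral_congr fun θ _ => h_product θ
    _ = ((∫ θ in (0 : ℝ)..π, h (θ + -φ)) + ∫ θ in (0 : ℝ)..π, h (θ + φ)) / 2 := by
        simp_rw [intervalIntegral.integral_div, sub_eq_add_neg]
        rw [intervalIntegral.integral_add (h_shift_int _) (h_shift_int _)]
    _ = ∫ θ in (0 : ℝ)..π, h θ := by rw [h_shift, h_shift]; ring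
    _ = 2 * ∫ θ in (0 : ℝ)..π / 2, h θ :=
        integral_eq_two_mul_integral_half_of_symm (h_cont.intervalIntegrable _ _) fun θ => by
          simp only [h, sin_pi_sub]

/-- convergence and equality of the improper integrals
`∫_0^1 cos(αξ) cos(γ√(1−ξ²))/√(1−ξ²) dξ = ∫_0^1 cos(√(α²+γ²) ξ)/√(1−ξ²) dξ`. -/
theorem stmt_10 (α γ : ℝ) :
    IntervalIntegrable
      (fun ξ : ℝ => Real.cos (α * ξ) * Real.cos (γ * Real.sqrt (1 - ξ ^ 2)) /
        Real.sqrt (1 - ξ ^ 2)) volume 0 1 ∧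
    IntervalIntegrable
      (fun ξ : ℝ => Real.cos (Real.sqrt (α ^ 2 + γ ^ 2) * ξ) / Real.sqrt (1 - ξ ^ 2))
      volume 0 1 ∧
    (∫ ξ in (0:ℝ)..1,
        Real.cos (α * ξ) * Real.cos (γ * Real.sqrt (1 - ξ ^ 2)) / Real.sqrt (1 - ξ ^ 2))
      = ∫ ξ in (0:ℝ)..1,
          Real.cos (Real.sqrt (α ^ 2 + γ ^ 2) * ξ) / Real.sqrt (1 - ξ ^ 2) := by
  refine ⟨(intervalIntegrable_div_sqrt_one_sub_sq_iff fun p => cos (α * p.1) * cos (γ * p.2)).2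
      (Continuous.intervalIntegrable (by fun_prop) _ _),
    (intervalIntegrable_div_sqrt_one_sub_sq_iff fun p => cos (√(α ^ 2 + γ ^ 2) * p.1)).2
      (Continuous.intervalIntegrable (by fun_prop) _ _), ?_⟩
  calc _ = ∫ θ in (0 : ℝ)..π / 2, cos (α * sin θ) * cos (γ * cos θ) :=
        integral_div_sqrt_one_sub_sq fun p => cos (α * p.1) * cos (γ * p.2)
    _ = ∫ θ in (0 : ℝ)..π / 2, cos (√(α ^ 2 + γ ^ 2) * sin θ) :=
        integral_cos_mul_sin_mul_cos_mul_cos α γ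
    _ = _ := (integral_div_sqrt_one_sub_sq fun p => cos (√(α ^ 2 + γ ^ 2) * p.1)).symm
end
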